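/- Let C > 0 and X_1, …, X_n be independent random variables with X_i ∈ [0,C] a.s., and let μ = E[Σ_i X_i]. If μ ≤ C, then E[min(Σ_i X_i, C)] ≥ (1 - 1/e)·μ. -/

import Mathlib

open MeasureTheory ProbabilityTheory

/-!
For `x i ∈ [0, C]` the Weierstrass product inequality gives
`C * (1 - ∏ i, (1 - x i / C)) ≤ min (∑ i, x i) C`. The left side is a product of independent
factors, so its expectation is `C * (1 - ∏ i, (1 - E[X i] / C))`, which is at least
`C * (1 - exp (-E[∑ X i] / C))` because `1 - y ≤ exp (-y)`. Finally `t ↦ 1 - exp (-t)` is concave,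
so on `[0, 1]` it lies above its chord `(1 - exp (-1)) * t`.
-/
theorem Finset.one_sub_sum_le_prod_one_sub {ι : Type*} (s : Finset ι) {x : ι → ℝ}
    (h0 : ∀ i ∈ s, 0 ≤ x i) (h1 : ∀ i ∈ s, x i ≤ 1) :
    1 - ∑ i ∈ s, x i ≤ ∏ i ∈ s, (1 - x i) := by
  classical
  induction s using Finset.induction_on with
  | empty => simp
  | insert a s ha ih =>
    simp only [Finset.mem_insert, forall_eq_or_imp] at h0 h1
    rw [Finset.sum_insert ha, Finset.prod_insert ha]
    have hs : 0 ≤ ∑ i ∈ s, x i := Finset.sum_nonneg h0.2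
    nlinarith [mul_le_mul_of_nonneg_left (ih h0.2 h1.2) (sub_nonneg.2 h1.1)]

theorem Finset.prod_one_sub_le_exp_neg_sum {ι : Type*} (s : Finset ι) {x : ι → ℝ}
    (h1 : ∀ i ∈ s, x i ≤ 1) :
    ∏ i ∈ s, (1 - x i) ≤ Real.exp (-∑ i ∈ s, x i) := by
  rw [← Finset.sum_neg_distrib, Real.exp_sum]
  exact Finset.prod_le_prod (fun i hi => sub_nonneg.2 (h1 i hi))
    (fun i _ => Real.one_sub_le_exp_neg (x i))

theorem Real.one_sub_exp_neg_one_mul_le_one_sub_exp_neg {t : ℝ} (h0 : 0 ≤ t) (h1 : t ≤ 1) :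
    (1 - Real.exp (-1)) * t ≤ 1 - Real.exp (-t) := by
  have h := convexOn_exp.2 (Set.mem_univ 0) (Set.mem_univ (-1)) (sub_nonneg.2 h1) h0
    (sub_add_cancel 1 t)
  simp only [smul_eq_mul, mul_zero, mul_neg, mul_one, zero_add, Real.exp_zero] at h
  linarith

theorem mul_one_sub_prod_one_sub_div_le_min_sum {ι : Type*} (s : Finset ι) {C : ℝ} (hC : 0 < C)
    {x : ι → ℝ} (h0 : ∀ i ∈ s, 0 ≤ x i) (hC' : ∀ i ∈ s, x i ≤ C) :
    C * (1 - ∏ i ∈ s, (1 - x i / C)) ≤ min (∑ i ∈ s, x i) C := by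
  have hx0 : ∀ i ∈ s, 0 ≤ x i / C := fun i hi => div_nonneg (h0 i hi) hC.le
  have hx1 : ∀ i ∈ s, x i / C ≤ 1 := fun i hi => (div_le_one hC).2 (hC' i hi)
  refine le_min ?_ ?_
  · calc C * (1 - ∏ i ∈ s, (1 - x i / C)) ≤ C * ∑ i ∈ s, x i / C := by
          gcongr
          linarith [s.one_sub_sum_le_prod_one_sub hx0 hx1]
      _ = ∑ i ∈ s, x i := by rw [← Finset.sum_div, mul_div_cancel₀ _ hC.ne']
  · have : 0 ≤ ∏ i ∈ s, (1 - x i / C) := Finset.prod_nonneg fun i hi => sub_nonneg.2 (hx1 i hi)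
    nlinarith

theorem ProbabilityTheory.iIndepFun.integral_prod_one_sub_div {Ω ι : Type*} [MeasurableSpace Ω]
    {μ : Measure Ω} [Fintype ι] {X : ι → Ω → ℝ} (hindep : iIndepFun X μ)
    (hint : ∀ i, Integrable (X i) μ) (C : ℝ) :
    ∫ ω, ∏ i, (1 - X i ω / C) ∂μ = ∏ i, (1 - (∫ ω, X i ω ∂μ) / C) := by
  have := hindep.isProbabilityMeasure
  rw [hindep.integral_fun_prod_comp (f := fun _ x => 1 - x / C) (fun i => (hint i).aemeasurable)
    (fun _ => (by fun_prop : Measurable fun x : ℝ => 1 - x / C).aestronglyMeasurable)]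
  refine Finset.prod_congr rfl fun i _ => ?_
  rw [integral_sub (integrable_const 1) ((hint i).div_const C), integral_div]
  simp

theorem mul_one_sub_exp_neg_le_integral_min_sum {Ω ι : Type*} [MeasurableSpace Ω]
    {μ : Measure Ω} [IsProbabilityMeasure μ] [Fintype ι] {X : ι → Ω → ℝ} {C : ℝ} (hC : 0 < C)
    (hindep : iIndepFun X μ) (hint : ∀ i, Integrable (X i) μ)
    (h0 : ∀ i, ∀ᵐ ω ∂μ, 0 ≤ X i ω) (hle : ∀ i, ∀ᵐ ω ∂μ, X i ω ≤ C) :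
    C * (1 - Real.exp (-((∫ ω, ∑ i, X i ω ∂μ) / C))) ≤ ∫ ω, min (∑ i, X i ω) C ∂μ := by
  have hbd : ∀ᵐ ω ∂μ, ∀ i, 0 ≤ X i ω ∧ X i ω ≤ C := ae_all_iff.2 fun i => (h0 i).and (hle i)
  have hmean_le : ∀ i, (∫ ω, X i ω ∂μ) / C ≤ 1 := fun i =>
    (div_le_one hC).2 <| by simpa using integral_mono_ae (hint i) (integrable_const C) (hle i)
  have hsum_int : Integrable (fun ω => ∑ i, X i ω) μ := integrable_finsetSum _ fun i _ => hint i
  have hprod_int : Integrable (fun ω => ∏ i, (1 - X i ω / C)) μ := by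
    refine Integrable.of_bound (Finset.aestronglyMeasurable_fun_prod _ fun i _ =>
      ((integrable_const 1).sub ((hint i).div_const C)).aestronglyMeasurable) 1 ?_
    filter_upwards [hbd] with ω hω
    have hx : ∀ i, 0 ≤ 1 - X i ω / C ∧ 1 - X i ω / C ≤ 1 := fun i =>
      ⟨sub_nonneg.2 ((div_le_one hC).2 (hω i).2), sub_le_self _ (div_nonneg (hω i).1 hC.le)⟩
    rw [Real.norm_of_nonneg (Finset.prod_nonneg fun i _ => (hx i).1)]
    exact Finset.prod_le_one (fun i _ => (hx i).1) (fun i _ => (hx i).2)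
  have hmin_int : Integrable (fun ω => min (∑ i, X i ω) C) μ :=
    hsum_int.inf (integrable_const C)
  have hpointwise : ∀ᵐ ω ∂μ, C * (1 - ∏ i, (1 - X i ω / C)) ≤ min (∑ i, X i ω) C := by
    filter_upwards [hbd] with ω hω
    exact mul_one_sub_prod_one_sub_div_le_min_sum _ hC (fun i _ => (hω i).1) (fun i _ => (hω i).2)
  calc C * (1 - Real.exp (-((∫ ω, ∑ i, X i ω ∂μ) / C)))
      ≤ C * (1 - ∏ i, (1 - (∫ ω, X i ω ∂μ) / C)) := by
        rw [integral_finsetSum _ fun i _ => hint i, Finset.sum_div]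
        gcongr
        exact Finset.univ.prod_one_sub_le_exp_neg_sum fun i _ => hmean_le i
    _ = ∫ ω, C * (1 - ∏ i, (1 - X i ω / C)) ∂μ := by
        rw [integral_const_mul, integral_sub (integrable_const 1) hprod_int,
          hindep.integral_prod_one_sub_div hint]
        simp
    _ ≤ ∫ ω, min (∑ i, X i ω) C ∂μ :=
        integral_mono_ae (((integrable_const 1).sub hprod_int).const_mul C) hmin_int hpointwise

theorem stmt_4 {Ω : Type*} [MeasurableSpace Ω] (μ : Measure Ω) [IsProbabilityMeasure μ]
    (C : ℝ) (hC : 0 < C) (n : ℕ) (X : Fin n → Ω → ℝ)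
    (hindep : iIndepFun X μ)
    (h0 : ∀ i, ∀ᵐ ω ∂μ, 0 ≤ X i ω) (hCle : ∀ i, ∀ᵐ ω ∂μ, X i ω ≤ C)
    (hint : ∀ i, Integrable (X i) μ)
    (hμC : (∫ ω, ∑ i, X i ω ∂μ) ≤ C) :
    (∫ ω, min (∑ i, X i ω) C ∂μ) ≥
      (1 - 1 / Real.exp 1) * (∫ ω, ∑ i, X i ω ∂μ) := by
  set m := ∫ ω, ∑ i, X i ω ∂μ
  have hm0 : 0 ≤ m := integral_nonneg_of_ae <| by
    filter_upwards [ae_all_iff.2 h0] with ω hω using Finset.sum_nonneg fun i _ => hω i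
  have hconcave := Real.one_sub_exp_neg_one_mul_le_one_sub_exp_neg (div_nonneg hm0 hC.le)
    ((div_le_one hC).2 hμC)
  calc (1 - 1 / Real.exp 1) * m = C * ((1 - Real.exp (-1)) * (m / C)) := by
        rw [Real.exp_neg, one_div]; field_simp
    _ ≤ C * (1 - Real.exp (-(m / C))) := by gcongr
    _ ≤ ∫ ω, min (∑ i, X i ω) C ∂μ :=
        mul_one_sub_exp_neg_le_integral_min_sum hC hindep hint h0 hCle
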